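/- Partial-identification manifold: fix ν ∈ ℝ and a value p with 0 < p < Φ(ν). Then for every ρ ∈ (-1,1), there exists a unique μ(ρ) ∈ ℝ with Φ₂(μ(ρ), ν; ρ) = p, and the function ρ ↦ μ(ρ) is strictly decreasing on (-1,1). -/

import Mathlib

open MeasureTheory Real Set Filter

noncomputable def stdPdf (x : ℝ) : ℝ := (Real.sqrt (2 * Real.pi))⁻¹ * Real.exp (-(x ^ 2) / 2)

noncomputable def stdCdf (x : ℝ) : ℝ := ∫ v in Set.Iio x, stdPdf v

noncomputable def Phi2 (μ ν ρ : ℝ) : ℝ :=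
  ∫ v in Set.Iio μ, stdCdf ((ν - ρ * v) / Real.sqrt (1 - ρ ^ 2)) * stdPdf v

noncomputable def phi2 (μ ν ρ : ℝ) : ℝ :=
  (2 * Real.pi * Real.sqrt (1 - ρ ^ 2))⁻¹ *
    Real.exp (-(μ ^ 2 - 2 * ρ * μ * ν + ν ^ 2) / (2 * (1 - ρ ^ 2)))

open scoped Topology

/-! For fixed `ρ`, `μ ↦ Φ₂(μ, ν; ρ)` is the distribution function of a positive integrable
density, so it increases strictly and continuously from `0` to the total mass of that density.
Writing `Φ((ν - ρv)/√(1-ρ²))` as an integral and exchanging the order of integration, the total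
mass is `∫_{t<ν} ∫ φ₂(v, t; ρ) dv dt = Φ(ν)`, because the density
`φ₂(v, t; ρ) = φ(v) φ((t - ρv)/√(1-ρ²))/√(1-ρ²)` is symmetric in `v, t`. This gives the unique
root `μ(ρ)` of `Φ₂(·, ν; ρ) = p`.

The `ρ`-derivative of the integrand `Φ((ν - ρv)/√(1-ρ²)) φ(v)` is exactly `∂ᵥ φ₂(v, ν; ρ)`, so
differentiating under the integral gives `∂Φ₂/∂ρ = φ₂(μ, ν; ρ) > 0`. As `Φ₂` increases in both
`μ` and `ρ`, staying on the level set `Φ₂ = p` forces `μ(ρ)` to decrease. -/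

section IntegralIio

variable {h : ℝ → ℝ}

lemma integral_Iio_sub_integral_Iio (hi : Integrable h) (a b : ℝ) :
    (∫ v in Iio b, h v) - ∫ v in Iio a, h v = ∫ v in a..b, h v := by
  rw [← integral_Iic_eq_integral_Iio, ← integral_Iic_eq_integral_Iio]
  exact intervalIntegral.integral_Iic_sub_Iic hi.integrableOn hi.integrableOn

lemma hasDerivAt_integral_Iio (hc : Continuous h) (hi : Integrable h) (x : ℝ) :
    HasDerivAt (fun u => ∫ v in Iio u, h v) (h x) x := by
  have hint : HasDerivAt (fun u => ∫ v in (0 : ℝ)..u, h v) (h x) x :=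
    intervalIntegral.integral_hasDerivAt_right hi.intervalIntegrable
      (hc.stronglyMeasurableAtFilter _ _) hc.continuousAt
  refine (hint.add_const (∫ v in Iio 0, h v)).congr_of_eventuallyEq
    (Eventually.of_forall fun u => ?_)
  linarith [integral_Iio_sub_integral_Iio hi 0 u]

lemma strictMono_integral_Iio (hi : Integrable h) (hpos : ∀ x, 0 < h x) :
    StrictMono fun u => ∫ v in Iio u, h v := fun a b hab => by
  have := intervalIntegral.intervalIntegral_pos_of_pos hi.intervalIntegrable hpos hab
  linarith [integral_Iio_sub_integral_Iio hi a b]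

lemma tendsto_integral_Iio_atTop (hi : Integrable h) :
    Tendsto (fun u => ∫ v in Iio u, h v) atTop (𝓝 (∫ v, h v)) := by
  have := tendsto_setIntegral_of_monotone (μ := volume) (fun _ => measurableSet_Iio)
    (fun _ _ hab => Iio_subset_Iio hab) hi.integrableOn
  rwa [iUnion_Iio, Measure.restrict_univ] at this

lemma tendsto_integral_Iio_atBot (hi : Integrable h) :
    Tendsto (fun u => ∫ v in Iio u, h v) atBot (𝓝 0) := by
  have hanti := tendsto_setIntegral_of_antitone (μ := volume) (s := fun t : ℝ => Iio (-t))
    (fun _ => measurableSet_Iio) (fun _ _ hab => Iio_subset_Iio (neg_le_neg hab))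
    ⟨0, hi.integrableOn⟩
  have hempty : ⋂ t : ℝ, Iio (-t) = ∅ :=
    eq_empty_iff_forall_notMem.2 fun x hx => lt_irrefl x (by simpa using mem_iInter.1 hx (-x))
  rw [hempty, Measure.restrict_empty, integral_zero_measure] at hanti
  simpa [Function.comp_def] using hanti.comp tendsto_neg_atBot_atTop

end IntegralIio

lemma stdPdf_eq_gaussianPDFReal : stdPdf = ProbabilityTheory.gaussianPDFReal 0 1 := by
  ext x
  simp [stdPdf, ProbabilityTheory.gaussianPDFReal]

lemma stdPdf_pos (x : ℝ) : 0 < stdPdf x :=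
  stdPdf_eq_gaussianPDFReal ▸ ProbabilityTheory.gaussianPDFReal_pos _ _ _ one_ne_zero

lemma integrable_stdPdf : Integrable stdPdf :=
  stdPdf_eq_gaussianPDFReal ▸ ProbabilityTheory.integrable_gaussianPDFReal _ _

lemma integral_stdPdf : ∫ x, stdPdf x = 1 :=
  stdPdf_eq_gaussianPDFReal ▸ ProbabilityTheory.integral_gaussianPDFReal_eq_one _ one_ne_zero

lemma continuous_stdPdf : Continuous stdPdf := by
  unfold stdPdf
  fun_prop

lemma stdPdf_le (x : ℝ) : stdPdf x ≤ (√(2 * π))⁻¹ :=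
  mul_le_of_le_one_right (by positivity) (exp_le_one_iff.2 (by nlinarith [sq_nonneg x]))

lemma integrable_const_add_abs_mul_stdPdf (a : ℝ) :
    Integrable fun v => (a + |v|) * stdPdf v := by
  have hmul : Integrable fun x : ℝ => x * stdPdf x := by
    refine ((integrable_mul_exp_neg_mul_sq (b := 1 / 2) (by norm_num)).const_mul
      (√(2 * π))⁻¹).congr (Eventually.of_forall fun x => ?_)
    simp only [stdPdf]
    ring_nf
  refine ((integrable_stdPdf.const_mul a).add hmul.abs).congr (Eventually.of_forall fun x => ?_)
  simp [abs_mul, abs_of_pos (stdPdf_pos x), add_mul]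

lemma hasDerivAt_stdCdf (x : ℝ) : HasDerivAt stdCdf (stdPdf x) x :=
  hasDerivAt_integral_Iio continuous_stdPdf integrable_stdPdf x

lemma continuous_stdCdf : Continuous stdCdf :=
  continuous_iff_continuousAt.2 fun x => (hasDerivAt_stdCdf x).continuousAt

lemma tendsto_stdCdf_atBot : Tendsto stdCdf atBot (𝓝 0) :=
  tendsto_integral_Iio_atBot integrable_stdPdf

lemma stdCdf_nonneg (x : ℝ) : 0 ≤ stdCdf x :=
  setIntegral_nonneg measurableSet_Iio fun v _ => (stdPdf_pos v).le

lemma stdCdf_le_one (x : ℝ) : stdCdf x ≤ 1 :=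
  integral_stdPdf ▸ setIntegral_le_integral integrable_stdPdf
    (Eventually.of_forall fun v => (stdPdf_pos v).le)

lemma stdCdf_pos (x : ℝ) : 0 < stdCdf x :=
  (stdCdf_nonneg (x - 1)).trans_lt
    (strictMono_integral_Iio integrable_stdPdf stdPdf_pos (sub_one_lt x))

section Affine

variable {s : ℝ} (hs : 0 < s) (c : ℝ)
include hs

lemma integrable_stdPdf_affine : Integrable fun t => s⁻¹ * stdPdf ((t - c) / s) :=
  ((integrable_stdPdf.comp_div hs.ne').comp_sub_right c).const_mul _

lemma integral_stdPdf_affine : ∫ t, s⁻¹ * stdPdf ((t - c) / s) = 1 := by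
  rw [integral_const_mul, integral_sub_right_eq_self (fun t => stdPdf (t / s)) c,
    Measure.integral_comp_div stdPdf s, integral_stdPdf, abs_of_pos hs]
  simp [hs.ne']

lemma stdCdf_affine_eq_integral (ν : ℝ) :
    stdCdf ((ν - c) / s) = ∫ t in Iio ν, s⁻¹ * stdPdf ((t - c) / s) := by
  have hderiv (t : ℝ) :
      HasDerivAt (fun u => stdCdf ((u - c) / s)) (s⁻¹ * stdPdf ((t - c) / s)) t := by
    have := (hasDerivAt_stdCdf _).comp t (((hasDerivAt_id t).sub_const c).div_const s)
    simpa [mul_comm, Function.comp_def] using this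
  have hlim : Tendsto (fun u => stdCdf ((u - c) / s)) atBot (𝓝 0) :=
    tendsto_stdCdf_atBot.comp
      ((tendsto_atBot_add_const_right _ _ tendsto_id).atBot_div_const hs)
  rw [← integral_Iic_eq_integral_Iio, integral_Iic_of_hasDerivAt_of_tendsto'
    (fun t _ => hderiv t) (integrable_stdPdf_affine hs c).integrableOn hlim, sub_zero]

end Affine

lemma phi2_comm (μ ν ρ : ℝ) : phi2 μ ν ρ = phi2 ν μ ρ := by
  unfold phi2
  ring_nf

lemma phi2_eq_stdPdf_mul {ρ : ℝ} (hρ : ρ ^ 2 < 1) (μ ν : ℝ) :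
    phi2 μ ν ρ = stdPdf μ * ((√(1 - ρ ^ 2))⁻¹ * stdPdf ((ν - ρ * μ) / √(1 - ρ ^ 2))) := by
  have h1 : 0 < 1 - ρ ^ 2 := by linarith
  have hs : √(1 - ρ ^ 2) ≠ 0 := (sqrt_pos.2 h1).ne'
  have hexp : -(μ ^ 2 - 2 * ρ * μ * ν + ν ^ 2) / (2 * (1 - ρ ^ 2))
      = -(μ ^ 2) / 2 + -((ν - ρ * μ) / √(1 - ρ ^ 2)) ^ 2 / 2 := by
    rw [div_pow, sq_sqrt h1.le]
    field_simp
    ring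
  have hpi : (√(2 * π))⁻¹ * (√(2 * π))⁻¹ = (2 * π)⁻¹ := by
    rw [← mul_inv, mul_self_sqrt (by positivity)]
  unfold phi2 stdPdf
  rw [hexp, exp_add, mul_inv, ← hpi]
  ring

lemma phi2_pos {ρ : ℝ} (hρ : ρ ^ 2 < 1) (μ ν : ℝ) : 0 < phi2 μ ν ρ := by
  have : 0 < √(1 - ρ ^ 2) := sqrt_pos.2 (by linarith)
  rw [phi2_eq_stdPdf_mul hρ]
  have := stdPdf_pos μ
  have := stdPdf_pos ((ν - ρ * μ) / √(1 - ρ ^ 2))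
  positivity

lemma integral_phi2_fst {ρ : ℝ} (hρ : ρ ^ 2 < 1) (ν : ℝ) : ∫ μ, phi2 μ ν ρ = stdPdf ν := by
  simp_rw [phi2_comm _ ν, phi2_eq_stdPdf_mul hρ ν]
  rw [integral_const_mul, integral_stdPdf_affine (sqrt_pos.2 (by linarith)), mul_one]

lemma integrable_phi2 {ρ : ℝ} (hρ : ρ ^ 2 < 1) :
    Integrable (Function.uncurry fun μ ν => phi2 μ ν ρ) (volume.prod volume) := by
  have hs : 0 < √(1 - ρ ^ 2) := sqrt_pos.2 (by linarith)
  have hcont : Continuous (Function.uncurry fun μ ν => phi2 μ ν ρ) := by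
    unfold phi2
    fun_prop
  refine (integrable_prod_iff hcont.aestronglyMeasurable).2 ⟨Eventually.of_forall fun μ => ?_, ?_⟩
  · simp_rw [Function.uncurry_apply_pair, phi2_eq_stdPdf_mul hρ μ]
    exact (integrable_stdPdf_affine hs _).const_mul _
  · refine integrable_stdPdf.congr (Eventually.of_forall fun μ => ?_)
    simp_rw [Function.uncurry_apply_pair, norm_of_nonneg (phi2_pos hρ _ _).le,
      phi2_eq_stdPdf_mul hρ μ]
    rw [integral_const_mul, integral_stdPdf_affine hs, mul_one]

lemma integral_stdCdf_mul_stdPdf {ρ : ℝ} (hρ : ρ ^ 2 < 1) (ν : ℝ) :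
    ∫ v, stdCdf ((ν - ρ * v) / √(1 - ρ ^ 2)) * stdPdf v = stdCdf ν := by
  have hs : 0 < √(1 - ρ ^ 2) := sqrt_pos.2 (by linarith)
  have hint : Integrable (Function.uncurry fun μ ν => phi2 μ ν ρ)
      (volume.prod (volume.restrict (Iio ν))) := by
    have hrestr := Measure.prod_restrict (μ := (volume : Measure ℝ)) (ν := volume) univ (Iio ν)
    rw [Measure.restrict_univ] at hrestr
    exact hrestr ▸ (integrable_phi2 hρ).restrict
  calc ∫ v, stdCdf ((ν - ρ * v) / √(1 - ρ ^ 2)) * stdPdf v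
      = ∫ v, ∫ t in Iio ν, phi2 v t ρ := by
        congr 1 with v
        rw [stdCdf_affine_eq_integral hs, ← integral_mul_const]
        congr 1 with t
        rw [phi2_eq_stdPdf_mul hρ]
        ring
    _ = ∫ t in Iio ν, ∫ v, phi2 v t ρ := integral_integral_swap hint
    _ = stdCdf ν := setIntegral_congr_fun measurableSet_Iio fun t _ => integral_phi2_fst hρ t

lemma continuous_Phi2_integrand (ν ρ : ℝ) :
    Continuous fun v => stdCdf ((ν - ρ * v) / √(1 - ρ ^ 2)) * stdPdf v :=
  (continuous_stdCdf.comp (by fun_prop)).mul continuous_stdPdf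

lemma integrable_Phi2_integrand (ν ρ : ℝ) :
    Integrable fun v => stdCdf ((ν - ρ * v) / √(1 - ρ ^ 2)) * stdPdf v :=
  integrable_stdPdf.mono (continuous_Phi2_integrand ν ρ).aestronglyMeasurable
    (Eventually.of_forall fun v => by
      rw [norm_mul, norm_of_nonneg (stdCdf_nonneg _)]
      exact mul_le_of_le_one_left (norm_nonneg _) (stdCdf_le_one _))

lemma strictMono_Phi2 (ν ρ : ℝ) : StrictMono fun μ => Phi2 μ ν ρ :=
  strictMono_integral_Iio (integrable_Phi2_integrand ν ρ)
    fun v => mul_pos (stdCdf_pos _) (stdPdf_pos v)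

lemma existsUnique_Phi2_eq {ν ρ p : ℝ} (hρ : ρ ^ 2 < 1) (hp0 : 0 < p) (hp1 : p < stdCdf ν) :
    ∃! μ, Phi2 μ ν ρ = p := by
  have hcont : Continuous fun μ => Phi2 μ ν ρ :=
    continuous_iff_continuousAt.2 fun μ => (hasDerivAt_integral_Iio
      (continuous_Phi2_integrand ν ρ) (integrable_Phi2_integrand ν ρ) μ).continuousAt
  have hbot : Tendsto (fun μ => Phi2 μ ν ρ) atBot (𝓝 0) :=
    tendsto_integral_Iio_atBot (integrable_Phi2_integrand ν ρ)
  have htop : Tendsto (fun μ => Phi2 μ ν ρ) atTop (𝓝 (stdCdf ν)) :=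
    integral_stdCdf_mul_stdPdf hρ ν ▸ tendsto_integral_Iio_atTop (integrable_Phi2_integrand ν ρ)
  obtain ⟨μ, hμ⟩ := mem_range_of_exists_le_of_exists_ge hcont
    ((hbot.eventually (gt_mem_nhds hp0)).exists.imp fun _ => le_of_lt)
    ((htop.eventually (lt_mem_nhds hp1)).exists.imp fun _ => le_of_lt)
  exact ⟨μ, hμ, fun μ' hμ' => (strictMono_Phi2 ν ρ).injective (hμ'.trans hμ.symm)⟩

lemma hasDerivAt_div_sqrt_one_sub_sq {ρ : ℝ} (hρ : ρ ^ 2 < 1) (ν v : ℝ) :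
    HasDerivAt (fun r => (ν - r * v) / √(1 - r ^ 2))
      ((ρ * ν - v) / ((1 - ρ ^ 2) * √(1 - ρ ^ 2))) ρ := by
  have h1 : 0 < 1 - ρ ^ 2 := by linarith
  have hs : √(1 - ρ ^ 2) ≠ 0 := (sqrt_pos.2 h1).ne'
  have hnum : HasDerivAt (fun r : ℝ => ν - r * v) (-v) ρ := by
    simpa using ((hasDerivAt_id ρ).mul_const v).const_sub ν
  have hden : HasDerivAt (fun r => √(1 - r ^ 2)) (-ρ / √(1 - ρ ^ 2)) ρ := by
    refine (((hasDerivAt_pow 2 ρ).const_sub 1).sqrt h1.ne').congr_deriv ?_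
    field_simp
    ring
  refine (hnum.div hden hs).congr_deriv ?_
  rw [sq_sqrt h1.le]
  field_simp
  rw [sq_sqrt h1.le]
  ring

lemma hasDerivAt_phi2_fst (ν ρ v : ℝ) :
    HasDerivAt (fun u => phi2 u ν ρ) (phi2 v ν ρ * ((ρ * ν - v) / (1 - ρ ^ 2))) v := by
  have hq : HasDerivAt (fun u : ℝ => -(u ^ 2 - 2 * ρ * u * ν + ν ^ 2) / (2 * (1 - ρ ^ 2)))
      ((ρ * ν - v) / (1 - ρ ^ 2)) v := by
    refine (((((hasDerivAt_pow 2 v).sub (((hasDerivAt_id' v).const_mul (2 * ρ)).mul_const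
      ν)).add_const (ν ^ 2)).neg).div_const (2 * (1 - ρ ^ 2))).congr_deriv ?_
    rw [← div_div]
    norm_num
    ring
  refine (hq.exp.const_mul (2 * π * √(1 - ρ ^ 2))⁻¹).congr_deriv ?_
  simp only [phi2]
  ring

lemma tendsto_phi2_fst_atBot {ρ : ℝ} (hρ : ρ ^ 2 < 1) (ν : ℝ) :
    Tendsto (fun u => phi2 u ν ρ) atBot (𝓝 0) := by
  have h1 : 0 < 1 - ρ ^ 2 := by linarith
  have hquad : Tendsto (fun u : ℝ => u ^ 2 - 2 * ρ * u * ν + ν ^ 2) atBot atTop := by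
    have hsq : Tendsto (fun u : ℝ => (u - ρ * ν) ^ 2) atBot atTop :=
      (tendsto_pow_atTop two_ne_zero).comp (tendsto_abs_atBot_atTop.comp
        (tendsto_atBot_add_const_right _ (-(ρ * ν)) tendsto_id)) |>.congr fun u => by
        simp [sq_abs, sub_eq_add_neg]
    refine (tendsto_atTop_add_const_right _ ((1 - ρ ^ 2) * ν ^ 2) hsq).congr fun u => by ring
  have := (tendsto_exp_atBot.comp ((tendsto_neg_atTop_atBot.comp hquad).atBot_div_const
    (by positivity : 0 < 2 * (1 - ρ ^ 2)))).const_mul (2 * π * √(1 - ρ ^ 2))⁻¹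
  simpa [phi2, Function.comp_def, neg_div] using this

lemma integral_Iio_deriv_phi2 {ρ : ℝ} (hρ : ρ ^ 2 < 1) (μ ν : ℝ)
    (hint : IntegrableOn (fun v => phi2 v ν ρ * ((ρ * ν - v) / (1 - ρ ^ 2))) (Iio μ)) :
    ∫ v in Iio μ, phi2 v ν ρ * ((ρ * ν - v) / (1 - ρ ^ 2)) = phi2 μ ν ρ := by
  rw [← integral_Iic_eq_integral_Iio, integral_Iic_of_hasDerivAt_of_tendsto'
    (fun v _ => hasDerivAt_phi2_fst ν ρ v) (by rwa [integrableOn_Iic_iff_integrableOn_Iio])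
    (tendsto_phi2_fst_atBot hρ ν), sub_zero]

lemma hasDerivAt_Phi2_integrand_rho {ρ : ℝ} (hρ : ρ ^ 2 < 1) (ν v : ℝ) :
    HasDerivAt (fun r => stdCdf ((ν - r * v) / √(1 - r ^ 2)) * stdPdf v)
      (phi2 v ν ρ * ((ρ * ν - v) / (1 - ρ ^ 2))) ρ := by
  refine (((hasDerivAt_stdCdf _).comp ρ (hasDerivAt_div_sqrt_one_sub_sq hρ ν v)).mul_const
    (stdPdf v)).congr_deriv ?_
  rw [phi2_eq_stdPdf_mul hρ]
  field_simp

lemma abs_deriv_phi2_le {r ρ : ℝ} (hr : r < 1) (hρ : |ρ| ≤ r) (ν v : ℝ) :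
    |phi2 v ν ρ * ((ρ * ν - v) / (1 - ρ ^ 2))|
      ≤ (√(2 * π) * ((1 - r ^ 2) * √(1 - r ^ 2)))⁻¹ * ((|ν| + |v|) * stdPdf v) := by
  have hr2 : ρ ^ 2 ≤ r ^ 2 := sq_le_sq' (abs_le.1 hρ).1 (abs_le.1 hρ).2
  have h1 : 0 < 1 - r ^ 2 := by nlinarith [abs_nonneg ρ]
  have hs : √(1 - r ^ 2) ≤ √(1 - ρ ^ 2) := sqrt_le_sqrt (by linarith)
  have hsr : 0 < √(1 - r ^ 2) := sqrt_pos.2 h1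
  have hρ1 : 0 < 1 - ρ ^ 2 := by linarith
  have hρr : 1 - r ^ 2 ≤ 1 - ρ ^ 2 := by linarith
  have hnum : |ρ * ν - v| ≤ |ν| + |v| :=
    calc |ρ * ν - v| ≤ |ρ * ν| + |v| := abs_sub _ _
      _ ≤ |ν| + |v| := by
        rw [abs_mul]
        gcongr
        exact mul_le_of_le_one_left (abs_nonneg ν) (by linarith)
  calc |phi2 v ν ρ * ((ρ * ν - v) / (1 - ρ ^ 2))|
      = phi2 v ν ρ * (|ρ * ν - v| / (1 - ρ ^ 2)) := by
        rw [abs_mul, abs_of_pos (phi2_pos (by linarith) _ _), abs_div, abs_of_pos hρ1]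
    _ ≤ stdPdf v * ((√(1 - ρ ^ 2))⁻¹ * (√(2 * π))⁻¹) * ((|ν| + |v|) / (1 - ρ ^ 2)) := by
        rw [phi2_eq_stdPdf_mul (by linarith)]
        have := stdPdf_pos v
        gcongr
        exact stdPdf_le _
    _ ≤ stdPdf v * ((√(1 - r ^ 2))⁻¹ * (√(2 * π))⁻¹) * ((|ν| + |v|) / (1 - r ^ 2)) := by
        have := stdPdf_pos v
        gcongr
    _ = (√(2 * π) * ((1 - r ^ 2) * √(1 - r ^ 2)))⁻¹ * ((|ν| + |v|) * stdPdf v) := by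
        rw [mul_inv, mul_inv]
        ring

lemma sq_lt_one_of_mem_Ioo {ρ : ℝ} (hρ : ρ ∈ Ioo (-1) 1) : ρ ^ 2 < 1 :=
  (sq_lt_one_iff_abs_lt_one ρ).2 (abs_lt.2 hρ)

lemma hasDerivAt_Phi2_rho (μ ν : ℝ) {ρ : ℝ} (hρ : ρ ^ 2 < 1) :
    HasDerivAt (fun r => Phi2 μ ν r) (phi2 μ ν ρ) ρ := by
  have hρ1 : |ρ| < 1 := (sq_lt_one_iff_abs_lt_one ρ).1 hρ
  obtain ⟨r, hρr, hr1⟩ := exists_between hρ1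
  have hnhds : Ioo (-r) r ∈ 𝓝 ρ :=
    Ioo_mem_nhds (by linarith [neg_abs_le ρ]) (by linarith [le_abs_self ρ])
  have hsq (x : ℝ) (hx : x ∈ Ioo (-r) r) : x ^ 2 < 1 :=
    (sq_lt_one_iff_abs_lt_one x).2 ((abs_lt.2 hx).trans hr1)
  have hbound := (integrable_const_add_abs_mul_stdPdf |ν|).const_mul
    (√(2 * π) * ((1 - r ^ 2) * √(1 - r ^ 2)))⁻¹
  obtain ⟨hint, hderiv⟩ := hasDerivAt_integral_of_dominated_loc_of_deriv_le
    (μ := volume.restrict (Iio μ))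
    (F := fun r v => stdCdf ((ν - r * v) / √(1 - r ^ 2)) * stdPdf v)
    (F' := fun r v => phi2 v ν r * ((r * ν - v) / (1 - r ^ 2))) hnhds
    (Eventually.of_forall fun r => (continuous_Phi2_integrand ν r).aestronglyMeasurable)
    (integrable_Phi2_integrand ν ρ).integrableOn
    (by unfold phi2; fun_prop : Continuous _).aestronglyMeasurable
    (Eventually.of_forall fun v x hx => abs_deriv_phi2_le hr1 (abs_lt.2 hx).le ν v)
    hbound.integrableOn
    (Eventually.of_forall fun v x hx => hasDerivAt_Phi2_integrand_rho (hsq x hx) ν v)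
  rwa [integral_Iio_deriv_phi2 hρ μ ν hint] at hderiv

lemma strictMonoOn_Phi2_rho (μ ν : ℝ) : StrictMonoOn (fun ρ => Phi2 μ ν ρ) (Ioo (-1) 1) := by
  refine strictMonoOn_of_deriv_pos (convex_Ioo _ _) (fun ρ hρ =>
    (hasDerivAt_Phi2_rho μ ν (sq_lt_one_of_mem_Ioo hρ)).continuousAt.continuousWithinAt)
    fun ρ hρ => ?_
  rw [interior_Ioo] at hρ
  rw [(hasDerivAt_Phi2_rho μ ν (sq_lt_one_of_mem_Ioo hρ)).deriv]
  exact phi2_pos (sq_lt_one_of_mem_Ioo hρ) μ ν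

theorem stmt17 (ν p : ℝ) (hp0 : 0 < p) (hp1 : p < stdCdf ν) :
    ∃ f : ℝ → ℝ,
      (∀ ρ ∈ Set.Ioo (-1 : ℝ) 1,
        Phi2 (f ρ) ν ρ = p ∧ ∀ μ : ℝ, Phi2 μ ν ρ = p → μ = f ρ) ∧
      StrictAntiOn f (Set.Ioo (-1 : ℝ) 1) := by
  choose! f hf using fun ρ (hρ : ρ ∈ Ioo (-1 : ℝ) 1) =>
    existsUnique_Phi2_eq (sq_lt_one_of_mem_Ioo hρ) hp0 hp1
  refine ⟨f, hf, fun ρ₁ h₁ ρ₂ h₂ hlt => (strictMono_Phi2 ν ρ₁).lt_iff_lt.1 ?_⟩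
  calc Phi2 (f ρ₂) ν ρ₁ < Phi2 (f ρ₂) ν ρ₂ := strictMonoOn_Phi2_rho _ ν h₁ h₂ hlt
    _ = Phi2 (f ρ₁) ν ρ₁ := (hf ρ₂ h₂).1.trans (hf ρ₁ h₁).1.symm
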